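/- arXiv:hep-th/9410020 — 5 statements merged into one kernel-verified Lean document; each statement's English description precedes it below -/
import Mathlib

section
/- If Q is a self-adjoint operator on a finite-dimensional complex inner product space anticommuting with a self-adjoint involution τ, then the supertrace of exp(-β·Q²) is independent of β > 0; more precisely, Tr(τ·exp(-β·Q²)) = Tr(τ restricted to ker Q) = dim(ker Q ∩ V₊) - dim(ker Q ∩ V₋) for all β > 0. -/
/-!
Because τ anticommutes with Q, cycling the trace gives `Tr(τ Q B) = -Tr(τ Q B)` whenever `B`
commutes with `Q`. Hence every term of positive degree in the exponential series of `-β Q²` has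
vanishing supertrace, and `Tr(τ e^{-βQ²}) = Tr τ = dim V₊ - dim V₋`.

On the other side, `Q` maps `V₊` into `V₋` and back, and since `ker Q² = ker Q` it is injective on
its own range; so `Q(V₋) ≅ Q(Q(V₋)) ⊆ Q(V₊)` and symmetrically, i.e. `Q(V₊)` and `Q(V₋)` have the
same dimension. Rank–nullity for `Q` restricted to `V₊` and to `V₋` then turns
`dim V₊ - dim V₋` into `dim (ker Q ∩ V₊) - dim (ker Q ∩ V₋)`.
-/

open Module Module.End

theorem Submodule.finrank_map_add_finrank_inf_ker {K V W : Type*} [Field K] [AddCommGroup V]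
    [Module K V] [FiniteDimensional K V] [AddCommGroup W] [Module K W] (f : V →ₗ[K] W)
    (p : Submodule K V) :
    finrank K (p.map f) + finrank K ↥(p ⊓ LinearMap.ker f) = finrank K p := by
  rw [← LinearMap.range_domRestrict, ← (f.domRestrict p).finrank_range_add_finrank_ker,
    LinearMap.ker_domRestrict, ← Submodule.map_comap_subtype, Submodule.finrank_map_subtype_eq]

namespace Module.End

variable {K V : Type*} [Field K] [AddCommGroup V] [Module K V]

theorem map_eigenspace_le_eigenspace_neg {τ Q : End K V} (hanti : τ * Q + Q * τ = 0) (μ : K) :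
    (eigenspace τ μ).map Q ≤ eigenspace τ (-μ) := by
  rintro _ ⟨x, hx, rfl⟩
  rw [SetLike.mem_coe, mem_eigenspace_iff] at hx
  rw [mem_eigenspace_iff]
  have hx' := LinearMap.congr_fun hanti x
  simp only [LinearMap.add_apply, mul_apply, hx, map_smul, LinearMap.zero_apply] at hx'
  rw [neg_smul, eq_neg_iff_add_eq_zero, hx']

theorem isProj_eigenspace_of_mul_self_eq_one [NeZero (2 : K)] {τ : End K V} (hτ : τ * τ = 1)
    {μ : K} (hμ : μ * μ = 1) :
    LinearMap.IsProj (eigenspace τ μ) ((2⁻¹ : K) • (1 + μ • τ)) := by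
  constructor
  · intro x
    have hττ : τ (τ x) = x := LinearMap.congr_fun hτ x
    simp only [mem_eigenspace_iff, LinearMap.smul_apply, LinearMap.add_apply, one_apply,
      map_smul, map_add, hττ]
    linear_combination (norm := module) (-(2⁻¹ : K)) • hμ • τ x
  · intro x hx
    rw [mem_eigenspace_iff] at hx
    simp only [LinearMap.smul_apply, LinearMap.add_apply, one_apply, hx, smul_smul, hμ, one_smul]
    rw [← two_smul K x, smul_smul, inv_mul_cancel₀ two_ne_zero, one_smul]

variable [FiniteDimensional K V]

theorem trace_eq_finrank_eigenspace_one_sub [NeZero (2 : K)] {τ : End K V} (hτ : τ * τ = 1) :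
    LinearMap.trace K V τ = finrank K (eigenspace τ 1) - finrank K (eigenspace τ (-1)) := by
  rw [← (isProj_eigenspace_of_mul_self_eq_one hτ (one_mul 1)).trace,
    ← (isProj_eigenspace_of_mul_self_eq_one hτ (by ring)).trace, ← map_sub]
  congr 1
  rw [← smul_sub, one_smul, neg_one_smul, add_sub_add_left_eq_sub, sub_neg_eq_add,
    ← two_smul K τ, smul_smul, inv_mul_cancel₀ two_ne_zero, one_smul]

theorem finrank_map_map_self {Q : End K V} (hker : LinearMap.ker (Q * Q) = LinearMap.ker Q)
    (p : Submodule K V) : finrank K ((p.map Q).map Q) = finrank K (p.map Q) := by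
  have hbot : p.map Q ⊓ LinearMap.ker Q = ⊥ := by
    refine eq_bot_iff.mpr fun _ ⟨⟨x, _, hx⟩, hQ⟩ => ?_
    subst hx
    have hQQ : x ∈ LinearMap.ker (Q * Q) := hQ
    rwa [hker] at hQQ
  have hrank := Submodule.finrank_map_add_finrank_inf_ker Q (p.map Q)
  rwa [hbot, finrank_bot, add_zero] at hrank

theorem finrank_map_eigenspace_neg {τ Q : End K V} (hanti : τ * Q + Q * τ = 0)
    (hker : LinearMap.ker (Q * Q) = LinearMap.ker Q) (μ : K) :
    finrank K ((eigenspace τ (-μ)).map Q) = finrank K ((eigenspace τ μ).map Q) := by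
  have hle (ν : K) :
      finrank K ((eigenspace τ (-ν)).map Q) ≤ finrank K ((eigenspace τ ν).map Q) := by
    have hmaps := map_eigenspace_le_eigenspace_neg hanti (-ν)
    rw [neg_neg] at hmaps
    exact finrank_map_map_self hker (eigenspace τ (-ν)) ▸
      Submodule.finrank_mono (Submodule.map_mono hmaps)
  have hge := hle (-μ)
  rw [neg_neg] at hge
  exact le_antisymm (hle μ) hge

theorem finrank_eigenspace_add_finrank_ker_inf_eigenspace_neg {τ Q : End K V}
    (hanti : τ * Q + Q * τ = 0) (hker : LinearMap.ker (Q * Q) = LinearMap.ker Q) (μ : K) :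
    finrank K (eigenspace τ μ) + finrank K ↥(LinearMap.ker Q ⊓ eigenspace τ (-μ)) =
      finrank K (eigenspace τ (-μ)) + finrank K ↥(LinearMap.ker Q ⊓ eigenspace τ μ) := by
  rw [← Submodule.finrank_map_add_finrank_inf_ker Q (eigenspace τ μ),
    ← Submodule.finrank_map_add_finrank_inf_ker Q (eigenspace τ (-μ)),
    finrank_map_eigenspace_neg hanti hker, inf_comm, inf_comm (eigenspace τ (-μ))]
  ring

end Module.End

namespace Matrix

variable {n : Type*} [Fintype n]

theorem IsHermitian.ker_mulVecLin_mul_self {𝕜 : Type*} [RCLike 𝕜] {A : Matrix n n 𝕜}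
    (hA : A.IsHermitian) :
    LinearMap.ker (A.mulVecLin * A.mulVecLin) = LinearMap.ker A.mulVecLin := by
  rw [Module.End.mul_eq_comp, ← mulVecLin_mul]
  nth_rewrite 1 [← hA.eq]
  exact open scoped ComplexOrder in ker_mulVecLin_conjTranspose_mul_self A

theorem trace_mul_mul_eq_zero_of_anticomm {K : Type*} [Field K] [NeZero (2 : K)]
    {τ Q B : Matrix n n K} (hanti : τ * Q + Q * τ = 0) (hB : Commute Q B) :
    trace (τ * (Q * B)) = 0 := by
  have hneg : trace (τ * (Q * B)) = -trace (τ * (Q * B)) :=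
    calc trace (τ * (Q * B)) = trace (τ * (B * Q)) := by rw [hB.eq]
      _ = trace (Q * (τ * B)) := by rw [← Matrix.mul_assoc, trace_mul_comm]
      _ = trace (-(τ * Q) * B) := by rw [← Matrix.mul_assoc, eq_neg_of_add_eq_zero_right hanti]
      _ = -trace (τ * (Q * B)) := by rw [Matrix.neg_mul, trace_neg, Matrix.mul_assoc]
  have htwo : (2 : K) * trace (τ * (Q * B)) = 0 := by
    rw [two_mul]
    nth_rewrite 2 [hneg]
    exact add_neg_cancel _
  exact (mul_eq_zero.mp htwo).resolve_left two_ne_zero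

variable [DecidableEq n] {𝕜 : Type*} [RCLike 𝕜]

theorem trace_mul_exp_eq_trace {τ X : Matrix n n 𝕜} (h : ∀ k, trace (τ * X ^ (k + 1)) = 0) :
    trace (τ * NormedSpace.exp X) = trace τ := by
  open scoped Norms.Operator in
  have hsum := ((NormedSpace.exp_series_hasSum_exp' (𝕂 := 𝕜) X).mul_left τ).map
    (traceAddMonoidHom n 𝕜) continuous_id.matrix_trace
  refine hsum.unique (hasSum_single 0 fun k hk => ?_) |>.trans ?_
  · obtain ⟨k, rfl⟩ := Nat.exists_eq_succ_of_ne_zero hk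
    simp [h k]
  · simp

theorem trace_mul_exp_smul_mul_self {τ Q : Matrix n n 𝕜} (hanti : τ * Q + Q * τ = 0) (c : 𝕜) :
    trace (τ * NormedSpace.exp (c • (Q * Q))) = trace τ := by
  refine trace_mul_exp_eq_trace fun k => ?_
  rw [smul_pow, Matrix.mul_smul, trace_smul, ← pow_two, ← pow_mul, mul_add_one,
    show 2 * k + 2 = 2 * k + 1 + 1 from rfl, pow_succ' Q,
    trace_mul_mul_eq_zero_of_anticomm hanti (Commute.self_pow Q _), smul_zero]

end Matrix

theorem witten_index_supertrace_general {n : ℕ} (τ Q : Matrix (Fin n) (Fin n) ℂ)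
    (hτinv : τ * τ = 1)
    (hQsa : Q.IsHermitian) (hanti : τ * Q + Q * τ = 0) :
    ∀ β : ℝ, 0 < β →
      (τ * NormedSpace.exp (-(β : ℂ) • (Q * Q))).trace =
        ((Module.finrank ℂ
            ↥(LinearMap.ker Q.mulVecLin ⊓ Module.End.eigenspace τ.mulVecLin 1) : ℂ) -
         (Module.finrank ℂ
            ↥(LinearMap.ker Q.mulVecLin ⊓ Module.End.eigenspace τ.mulVecLin (-1)) : ℂ)) := by
  intro β _
  have hτ : τ.mulVecLin * τ.mulVecLin = 1 := by
    rw [Module.End.mul_eq_comp, ← Matrix.mulVecLin_mul, hτinv, Matrix.mulVecLin_one,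
      Module.End.one_eq_id]
  have hanti' : τ.mulVecLin * Q.mulVecLin + Q.mulVecLin * τ.mulVecLin = 0 := by
    rw [Module.End.mul_eq_comp, Module.End.mul_eq_comp, ← Matrix.mulVecLin_mul,
      ← Matrix.mulVecLin_mul, ← Matrix.mulVecLin_add, hanti, Matrix.mulVecLin_zero]
  have hdim := finrank_eigenspace_add_finrank_ker_inf_eigenspace_neg hanti'
    hQsa.ker_mulVecLin_mul_self 1
  rw [Matrix.trace_mul_exp_smul_mul_self hanti, ← Matrix.trace_toLin'_eq, Matrix.toLin'_apply',
    trace_eq_finrank_eigenspace_one_sub hτ]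
  linear_combination (norm := (push_cast; ring)) congrArg (Nat.cast : ℕ → ℂ) hdim

/-- The supertrace `Tr(τ e^{-βQ²})` is independent of `β > 0` and equals
`dim(ker Q ∩ V₊) - dim(ker Q ∩ V₋)` (the Witten index). -/
theorem witten_index_supertrace {n : ℕ} (τ Q : Matrix (Fin n) (Fin n) ℂ)
    (hτsa : τ.IsHermitian) (hτinv : τ * τ = 1)
    (hQsa : Q.IsHermitian) (hanti : τ * Q + Q * τ = 0) :
    ∀ β : ℝ, 0 < β →
      (τ * NormedSpace.exp (-(β : ℂ) • (Q * Q))).trace =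
        ((Module.finrank ℂ
            ↥(LinearMap.ker Q.mulVecLin ⊓ Module.End.eigenspace τ.mulVecLin 1) : ℂ) -
         (Module.finrank ℂ
            ↥(LinearMap.ker Q.mulVecLin ⊓ Module.End.eigenspace τ.mulVecLin (-1)) : ℂ)) :=
  witten_index_supertrace_general τ Q hτinv hQsa hanti
end

section
/- Witten index via supercharge block: if Q has block form with off-diagonal block q : V₊ → V₋ (i.e. Q(v₊,v₋) = (q* v₋, q v₊)), then Tr(τ exp(-β Q²)) = dim ker q - dim ker q* for all β > 0, i.e. the Witten index equals the Fredholm index of q. -/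
/-- Shortcut instance avoiding a typeclass-search blowup for the operator
algebra on a product of inner product spaces. -/
local instance topologicalRingCLM {E : Type*} [NormedAddCommGroup E] [NormedSpace ℂ E] :
    IsTopologicalRing (E →L[ℂ] E) := inferInstance

/-!
Since `τ` anticommutes with `Q`, the supertrace `X ↦ Tr(τ X)` vanishes on every power `Q^n`
with `n ≥ 1`: `Tr(τ Q Q^(n-1)) = Tr(Q^(n-1) τ Q) = -Tr(Q^n τ) = -Tr(τ Q^n)`. Expanding
`exp(-β Q²)` as a power series, only the constant term survives, so the Witten index is
`Tr τ = dim V₊ - dim V₋`, independently of `β`. Rank–nullity for `q` together with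
`ker q* = (range q)ᗮ` identifies this with `dim ker q - dim ker q*`.
-/

open LinearMap Module

theorem LinearMap.trace_mul_pow_eq_zero_of_mul_eq_neg_mul {R M : Type*} [CommRing R]
    [IsAddTorsionFree R] [AddCommGroup M] [Module R M] {t u : Module.End R M}
    (h : t * u = -(u * t)) {n : ℕ} (hn : n ≠ 0) : trace R M (t * u ^ n) = 0 := by
  obtain ⟨k, rfl⟩ := Nat.exists_eq_succ_of_ne_zero hn
  refine self_eq_neg.mp ?_
  calc trace R M (t * u ^ (k + 1))
      = trace R M (u ^ k * (t * u)) := by rw [pow_succ', ← mul_assoc, trace_mul_comm]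
    _ = -trace R M (u ^ (k + 1) * t) := by rw [h, mul_neg, map_neg, ← mul_assoc, ← pow_succ]
    _ = -trace R M (t * u ^ (k + 1)) := by rw [trace_mul_comm]

theorem LinearMap.trace_eq_finrank_sub_finrank_of_apply_eq_fst_neg_snd {R M N : Type*}
    [CommRing R] [AddCommGroup M] [Module R M] [Free R M] [Module.Finite R M]
    [AddCommGroup N] [Module R N] [Free R N] [Module.Finite R N]
    (τ : Module.End R (M × N)) (hτ : ∀ v, τ v = (v.1, -v.2)) :
    trace R (M × N) τ = finrank R M - finrank R N := by
  have : τ = prodMap id (-id) := LinearMap.ext fun v => by simp [hτ]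
  rw [this, trace_prodMap', map_neg, trace_id, trace_id, sub_eq_add_neg]

theorem LinearMap.finrank_ker_sub_finrank_ker_adjoint {𝕜 E F : Type*} [RCLike 𝕜]
    [NormedAddCommGroup E] [InnerProductSpace 𝕜 E] [FiniteDimensional 𝕜 E]
    [NormedAddCommGroup F] [InnerProductSpace 𝕜 F] [FiniteDimensional 𝕜 F] (q : E →ₗ[𝕜] F) :
    (finrank 𝕜 (ker q) : ℤ) - finrank 𝕜 (ker (adjoint q)) = finrank 𝕜 E - finrank 𝕜 F := by
  have hE := q.finrank_range_add_finrank_ker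
  have hF := (range q).finrank_add_finrank_orthogonal
  rw [q.orthogonal_range] at hF
  omega

theorem ContinuousLinearMap.trace_comp_exp_of_trace_mul_pow_eq_zero {𝕜 E : Type*} [RCLike 𝕜]
    [NormedAddCommGroup E] [NormedSpace 𝕜 E] [FiniteDimensional 𝕜 E] (t S : E →L[𝕜] E)
    (h : ∀ n ≠ 0, trace 𝕜 E ((t : E →ₗ[𝕜] E) * (S : E →ₗ[𝕜] E) ^ n) = 0) :
    trace 𝕜 E ↑(t ∘L NormedSpace.exp S) = trace 𝕜 E t := by
  have : CompleteSpace (E →L[𝕜] E) := FiniteDimensional.complete 𝕜 _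
  let supertrace : (E →L[𝕜] E) →L[𝕜] 𝕜 := LinearMap.toContinuousLinearMap
    (trace 𝕜 E ∘ₗ ContinuousLinearMap.coeLM 𝕜 ∘ₗ LinearMap.mulLeft 𝕜 t)
  have hsum := (NormedSpace.exp_series_hasSum_exp' (𝕂 := 𝕜) S).mapL supertrace
  refine hsum.unique (hasSum_single 0 fun n hn => ?_) |>.trans ?_
  · simp [supertrace, h n hn]
  · simp [supertrace]

/-- Witten index via the supercharge block `q`: with `Q(v₊,v₋) = (q* v₋, q v₊)`
and `τ(v₊,v₋) = (v₊, -v₋)`, one has `Tr(τ e^{-βQ²}) = dim ker q - dim ker q*`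
for every `β > 0` (the Witten index equals the Fredholm index of `q`). -/
theorem witten_index_eq_fredholm_index
    {Vp Vm : Type*}
    [NormedAddCommGroup Vp] [InnerProductSpace ℂ Vp] [FiniteDimensional ℂ Vp]
    [NormedAddCommGroup Vm] [InnerProductSpace ℂ Vm] [FiniteDimensional ℂ Vm]
    (q : Vp →ₗ[ℂ] Vm)
    (Q τ : (Vp × Vm) →L[ℂ] (Vp × Vm))
    (hQ : ∀ v : Vp × Vm, Q v = (LinearMap.adjoint q v.2, q v.1))
    (hτ : ∀ v : Vp × Vm, τ v = (v.1, -v.2)) :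
    ∀ β : ℝ, 0 < β →
      LinearMap.trace ℂ (Vp × Vm)
          ((τ.comp (NormedSpace.exp (-(β : ℂ) • (Q.comp Q)))) :
            (Vp × Vm) →ₗ[ℂ] (Vp × Vm)) =
        ((Module.finrank ℂ ↥(LinearMap.ker q) : ℂ) -
         (Module.finrank ℂ ↥(LinearMap.ker (LinearMap.adjoint q)) : ℂ)) := by
  intro β _
  have hanti : (τ : Module.End ℂ (Vp × Vm)) * Q = -(Q * τ) :=
    LinearMap.ext fun v => by simp [hQ, hτ]
  rw [ContinuousLinearMap.trace_comp_exp_of_trace_mul_pow_eq_zero,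
    trace_eq_finrank_sub_finrank_of_apply_eq_fst_neg_snd _ hτ]
  · exact_mod_cast (finrank_ker_sub_finrank_ker_adjoint q).symm
  · intro n hn
    rw [ContinuousLinearMap.toLinearMap_smul, smul_pow, mul_smul_comm, map_smul,
      ← ContinuousLinearMap.mul_def, ContinuousLinearMap.toLinearMap_mul, ← pow_two, ← pow_mul,
      trace_mul_pow_eq_zero_of_mul_eq_neg_mul hanti (by positivity), smul_zero]
end

section
/- Superpartner Berry connection difference: let Q(t) be a differentiable family of self-adjoint operators anticommuting with a fixed self-adjoint involution τ, H(t) = Q(t)², and let φ₊(t) be a differentiable family of unit eigenvectors of H(t) with eigenvalue E(t) > 0 lying in the +1 eigenspace of τ. Define φ₋(t) = E(t)^{-1/2} · Q(t) φ₊(t). Then the diagonal Berry connection difference satisfies ⟨φ₊(t), φ₊'(t)⟩ - ⟨φ₋(t), φ₋'(t)⟩ = (1/(2E(t))) · ⟨φ₊(t), [Q'(t), Q(t)] φ₊(t)⟩. -/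
/-!
Put `ψ = Q φ₊`. Then `‖ψ‖² = ⟨φ₊, Q² φ₊⟩ = E`, so `φ₋ = ψ / ‖ψ‖` and
`⟨φ₋, φ₋'⟩ = (⟨ψ, ψ'⟩ - E'/2) / E`. Expanding `ψ' = Q' φ₊ + Q φ₊'` gives
`⟨ψ, ψ'⟩ = a + E ⟨φ₊, φ₊'⟩` with `a = ⟨Q φ₊, Q' φ₊⟩`, and differentiating `‖ψ‖² = E` and
`‖φ₊‖² = 1` gives `E' = 2 Re a`. As a derivative of self-adjoint operators `Q'` is self-adjoint,
so the commutator term is `conj a - a`, and both sides equal `-i Im a / E`.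
-/

open RCLike ContinuousLinearMap ComplexConjugate

section

variable {𝕜 E F : Type*} [NontriviallyNormedField 𝕜] [NormedAlgebra ℝ 𝕜]
  [NormedAddCommGroup E] [NormedSpace 𝕜 E] [NormedSpace ℝ E] [IsScalarTower ℝ 𝕜 E]
  [NormedAddCommGroup F] [NormedSpace 𝕜 F] [NormedSpace ℝ F] [IsScalarTower ℝ 𝕜 F]
  {A : ℝ → E →L[𝕜] F} {A' : E →L[𝕜] F} {u : ℝ → E} {u' : E} {t : ℝ}

theorem HasDerivAt.clm_apply_of_real (hA : HasDerivAt A A' t) (hu : HasDerivAt u u' t) :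
    HasDerivAt (fun s => A s (u s)) (A' (u t) + A t u') t :=
  ((restrictScalarsL 𝕜 E F ℝ ℝ).hasFDerivAt.comp_hasDerivAt t hA).clm_apply hu

end

section

variable {𝕜 E : Type*} [RCLike 𝕜] [NormedAddCommGroup E] [InnerProductSpace 𝕜 E] {t : ℝ}

local notation "⟪" x ", " y "⟫" => inner 𝕜 x y

theorem two_mul_re_inner_eq_of_hasDerivAt_norm_sq [NormedSpace ℝ E] {u : ℝ → E} {u' : E}
    {f : ℝ → ℝ} {f' : ℝ}
    (hu : HasDerivAt u u' t) (hf : HasDerivAt f f' t) (huf : ∀ s, ‖u s‖ ^ 2 = f s) :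
    2 * re ⟪u t, u'⟫ = f' := by
  have h := (reCLM.hasFDerivAt.comp_hasDerivAt t (hu.inner 𝕜 hu))
  simp only [Function.comp_def, reCLM_apply, inner_self_eq_norm_sq, huf] at h
  rw [← h.unique hf, map_add, ← inner_conj_symm u', conj_re]
  ring

theorem HasDerivAt.isSymmetric [NormedSpace ℝ E] [IsScalarTower ℝ 𝕜 E]
    {A : ℝ → E →L[𝕜] E} {A' : E →L[𝕜] E}
    (hA : HasDerivAt A A' t) (hsymm : ∀ s, (A s : E →ₗ[𝕜] E).IsSymmetric) :
    (A' : E →ₗ[𝕜] E).IsSymmetric := by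
  intro v w
  have hleft := (hA.clm_apply_of_real (hasDerivAt_const t v)).inner 𝕜 (hasDerivAt_const t w)
  have hright := (hasDerivAt_const t v).inner 𝕜 (hA.clm_apply_of_real (hasDerivAt_const t w))
  rw [show (fun s => ⟪A s v, w⟫) = fun s => ⟪v, A s w⟫ from funext fun s => hsymm s v w]
    at hleft
  simpa using hleft.unique hright

theorem inner_comp_sub_comp_apply_self {A B : E →L[𝕜] E} (hA : (A : E →ₗ[𝕜] E).IsSymmetric)
    (hB : (B : E →ₗ[𝕜] E).IsSymmetric) (v : E) :
    ⟪v, (B ∘L A - A ∘L B) v⟫ = conj ⟪A v, B v⟫ - ⟪A v, B v⟫ := by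
  have hBA : ⟪v, B (A v)⟫ = conj ⟪A v, B v⟫ := by
    rw [inner_conj_symm]
    exact (hB v (A v)).symm
  have hAB : ⟪v, A (B v)⟫ = ⟪A v, B v⟫ := (hA v (B v)).symm
  rw [sub_apply, inner_sub_right, comp_apply, comp_apply, hBA, hAB]

theorem inner_inv_sqrt_smul_eq_of_hasDerivAt [NormedSpace ℝ E] [IsScalarTower ℝ 𝕜 E]
    {ψ : ℝ → E} {ψ' m : E} {f : ℝ → ℝ} {f' : ℝ}
    (hψ : HasDerivAt ψ ψ' t) (hf : HasDerivAt f f' t) (hpos : 0 < f t)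
    (hnorm : ‖ψ t‖ ^ 2 = f t) (hm : HasDerivAt (fun s => (√(f s))⁻¹ • ψ s) m t) :
    ⟪(√(f t))⁻¹ • ψ t, m⟫ = (⟪ψ t, ψ'⟫ - f' / 2) / f t := by
  set r := √(f t)
  have hr : 0 < r := Real.sqrt_pos.2 hpos
  have hr2 : r ^ 2 = f t := Real.sq_sqrt hpos.le
  have hinv : HasDerivAt (fun s => (√(f s))⁻¹ • ψ s)
      (r⁻¹ • ψ' + (-(f' / (2 * r)) / r ^ 2) • ψ t) t :=
    ((hf.sqrt hpos.ne').inv hr.ne').smul hψ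
  rw [hm.unique hinv]
  simp only [RCLike.real_smul_eq_coe_smul (K := 𝕜), inner_add_right, inner_smul_left,
    inner_smul_right, inner_self_eq_norm_sq_to_K, ← ofReal_pow, hnorm, conj_ofReal]
  rw [← hr2]
  push_cast
  field_simp
  ring

end

theorem superpartner_berry_connection_difference_general
    {V : Type*} [NormedAddCommGroup V] [InnerProductSpace ℂ V]
    (Q Q' : ℝ → V →L[ℂ] V)
    (E E' : ℝ → ℝ) (φp φp' φm' : ℝ → V)
    (hQsa : ∀ (t : ℝ) (v w : V), (inner ℂ (Q t v) w : ℂ) = inner ℂ v (Q t w))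
    (hQ : ∀ t : ℝ, HasDerivAt Q (Q' t) t)
    (hE : ∀ t : ℝ, HasDerivAt E (E' t) t)
    (hEpos : ∀ t : ℝ, 0 < E t)
    (hφp : ∀ t : ℝ, HasDerivAt φp (φp' t) t)
    (hφm : ∀ t : ℝ,
      HasDerivAt (fun s => (Real.sqrt (E s))⁻¹ • Q s (φp s)) (φm' t) t)
    (hnorm : ∀ t : ℝ, ‖φp t‖ = 1)
    (heig : ∀ t : ℝ, Q t (Q t (φp t)) = (E t : ℂ) • φp t) :
    ∀ t : ℝ,
      (inner ℂ (φp t) (φp' t) : ℂ) -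
          (inner ℂ ((Real.sqrt (E t))⁻¹ • Q t (φp t)) (φm' t) : ℂ) =
        (1 / (2 * (E t : ℂ))) *
          inner ℂ (φp t) ((Q' t ∘L Q t - Q t ∘L Q' t) (φp t)) := by
  intro t
  have hψ := (hQ t).clm_apply_of_real (hφp t)
  have hψnorm (s : ℝ) : ‖Q s (φp s)‖ ^ 2 = E s := by
    rw [← inner_self_eq_norm_sq (𝕜 := ℂ), hQsa, heig, inner_smul_right,
      inner_self_eq_norm_sq_to_K, hnorm]
    simp
  have hφ_re : re (inner ℂ (φp t) (φp' t)) = 0 := by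
    have := two_mul_re_inner_eq_of_hasDerivAt_norm_sq (𝕜 := ℂ) (hφp t) (hasDerivAt_const t 1)
      fun s => by rw [hnorm s, one_pow]
    linarith
  have hψψ' : inner ℂ (Q t (φp t)) (Q' t (φp t) + Q t (φp' t)) =
      inner ℂ (Q t (φp t)) (Q' t (φp t)) + E t * inner ℂ (φp t) (φp' t) := by
    rw [inner_add_right, ← hQsa t (Q t (φp t)), heig, inner_smul_left, Complex.conj_ofReal]
  have hE' := two_mul_re_inner_eq_of_hasDerivAt_norm_sq (𝕜 := ℂ) hψ (hE t) hψnorm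
  rw [hψψ'] at hE'
  rw [inner_inv_sqrt_smul_eq_of_hasDerivAt hψ (hE t) (hEpos t) (hψnorm t) (hφm t), hψψ',
    inner_comp_sub_comp_apply_self (hQsa t) ((hQ t).isSymmetric hQsa)]
  set a := inner ℂ (Q t (φp t)) (Q' t (φp t))
  set c := inner ℂ (φp t) (φp' t)
  have hE'a : (E' t : ℂ) = a + conj a := by
    rw [RCLike.add_conj, ← hE']
    simp [RCLike.re_to_complex ▸ hφ_re]
  have hEne : (E t : ℂ) ≠ 0 := by exact_mod_cast (hEpos t).ne'
  -- the cast `(f' : 𝕜)` of the general lemma arrives here as `algebraMap ℝ ℂ`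
  simp only [Complex.coe_algebraMap]
  rw [hE'a]
  field_simp
  ring

/-- Difference of the diagonal Berry connections of superpartners:
`⟨φ₊, φ₊'⟩ - ⟨φ₋, φ₋'⟩ = (1/2E) ⟨φ₊, [Q', Q] φ₊⟩`, where
`φ₋(t) = E(t)^{-1/2} Q(t) φ₊(t)`. -/
theorem superpartner_berry_connection_difference
    {V : Type*} [NormedAddCommGroup V] [InnerProductSpace ℂ V]
    [FiniteDimensional ℂ V]
    (τ : V →L[ℂ] V) (Q Q' : ℝ → V →L[ℂ] V)
    (E E' : ℝ → ℝ) (φp φp' φm' : ℝ → V)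
    (hτinv : ∀ v : V, τ (τ v) = v)
    (hτsa : ∀ v w : V, (inner ℂ (τ v) w : ℂ) = inner ℂ v (τ w))
    (hQsa : ∀ (t : ℝ) (v w : V), (inner ℂ (Q t v) w : ℂ) = inner ℂ v (Q t w))
    (hanti : ∀ (t : ℝ) (v : V), τ (Q t v) + Q t (τ v) = 0)
    (hQ : ∀ t : ℝ, HasDerivAt Q (Q' t) t)
    (hE : ∀ t : ℝ, HasDerivAt E (E' t) t)
    (hEpos : ∀ t : ℝ, 0 < E t)
    (hφp : ∀ t : ℝ, HasDerivAt φp (φp' t) t)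
    (hφm : ∀ t : ℝ,
      HasDerivAt (fun s => (Real.sqrt (E s))⁻¹ • Q s (φp s)) (φm' t) t)
    (hnorm : ∀ t : ℝ, ‖φp t‖ = 1)
    (hτφ : ∀ t : ℝ, τ (φp t) = φp t)
    (heig : ∀ t : ℝ, Q t (Q t (φp t)) = (E t : ℂ) • φp t) :
    ∀ t : ℝ,
      (inner ℂ (φp t) (φp' t) : ℂ) -
          (inner ℂ ((Real.sqrt (E t))⁻¹ • Q t (φp t)) (φm' t) : ℂ) =
        (1 / (2 * (E t : ℂ))) *
          inner ℂ (φp t) ((Q' t ∘L Q t - Q t ∘L Q' t) (φp t)) :=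
  superpartner_berry_connection_difference_general Q Q' E E' φp φp' φm' hQsa hQ hE hEpos hφp hφm
    hnorm heig
end

section
/- If U₊, U₋ : ℝ → Matrix (Fin n) (Fin n) ℂ are differentiable solutions of U₊' = -(B₊ + iE)U₊ and U₋' = -(B₋ + iE)U₋ with U₊(0) = U₋(0) = I and each U₋(t) invertible, then the super-determinant D(t) = Det U₊(t) · (Det U₋(t))⁻¹ satisfies D'(t) = -D(t)·(Tr B₊(t) - Tr B₋(t)); in particular the dynamical phase E cancels. -/
/-!
By Jacobi's formula, a solution of `U' = A U` has `(det U)' = det U · tr A`. Hence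
`(det U±)' = -det U± · (tr B± + i tr E)`, and in the logarithmic derivative of
`det U₊ / det U₋` the common term `-i tr E` cancels.
-/

attribute [local instance] Matrix.frobeniusNormedAddCommGroup Matrix.frobeniusNormedSpace

open Matrix Finset

section Algebra

variable {n R : Type*} [Fintype n] [DecidableEq n] [CommRing R]

theorem Matrix.det_updateCol_transpose_eq_adjugate_mul_apply (U V : Matrix n n R) (i : n) :
    (U.updateCol i (Vᵀ i)).det = (U.adjugate * V) i i := by
  rw [← cramer_apply, cramer_eq_adjugate_mulVec]
  rfl

theorem Matrix.sum_det_updateCol_mul_eq_det_mul_trace (U A : Matrix n n R) :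
    ∑ i, (U.updateCol i ((A * U)ᵀ i)).det = U.det * A.trace := by
  simp_rw [det_updateCol_transpose_eq_adjugate_mul_apply]
  calc ∑ i, (U.adjugate * (A * U)) i i = (U.adjugate * A * U).trace := by
        rw [Matrix.mul_assoc]; rfl
    _ = (U * U.adjugate * A).trace := by rw [trace_mul_comm, Matrix.mul_assoc]
    _ = U.det * A.trace := by rw [mul_adjugate, smul_mul, Matrix.one_mul, trace_smul, smul_eq_mul]

theorem Matrix.prod_updateCol_apply_perm (M : Matrix n n R) (v : n → R) (σ : Equiv.Perm n)
    (i : n) : ∏ j, M.updateCol i v (σ j) j = (∏ j ∈ univ.erase i, M (σ j) j) * v (σ i) := by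
  rw [← mul_prod_erase univ _ (mem_univ i), mul_comm, updateCol_self]
  congr 1
  exact prod_congr rfl fun j hj => updateCol_ne (ne_of_mem_erase hj)

end Algebra

section Calculus

variable {𝕜 : Type*} [NontriviallyNormedField 𝕜]

theorem HasDerivAt.matrix_apply {E m n : Type*} [NormedAddCommGroup E] [NormedSpace 𝕜 E]
    [Fintype m] [Fintype n] {U : 𝕜 → Matrix m n E} {U' : Matrix m n E} {t : 𝕜}
    (h : HasDerivAt U U' t) (i : m) (j : n) : HasDerivAt (fun s => U s i j) (U' i j) t :=
  (⟨entryLinearMap 𝕜 E i j, (continuous_apply j).comp (continuous_apply i)⟩ :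
    Matrix m n E →L[𝕜] E).hasFDerivAt.comp_hasDerivAt t h

variable {𝔸 n : Type*} [NormedCommRing 𝔸] [NormedAlgebra 𝕜 𝔸] [Fintype n] [DecidableEq n]
  {U : 𝕜 → Matrix n n 𝔸} {t : 𝕜}

theorem HasDerivAt.matrix_det {U' : Matrix n n 𝔸} (h : HasDerivAt U U' t) :
    HasDerivAt (fun s => (U s).det) (∑ i, ((U t).updateCol i (U'ᵀ i)).det) t := by
  have hprod (σ : Equiv.Perm n) : HasDerivAt (fun s => ∏ i, U s (σ i) i)
      (∑ i, ∏ j, (U t).updateCol i (U'ᵀ i) (σ j) j) t := by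
    simpa only [prod_updateCol_apply_perm, transpose_apply, smul_eq_mul] using
      HasDerivAt.fun_finsetProd fun i _ => h.matrix_apply (σ i) i
  simp_rw [det_apply', sum_comm (γ := n)]
  exact HasDerivAt.fun_sum fun σ _ => by
    simpa only [mul_sum] using (hprod σ).const_mul (Equiv.Perm.sign σ : 𝔸)

theorem HasDerivAt.matrix_det_of_eq_mul {A : Matrix n n 𝔸} (h : HasDerivAt U (A * U t) t) :
    HasDerivAt (fun s => (U s).det) ((U t).det * A.trace) t := by
  simpa only [sum_det_updateCol_mul_eq_det_mul_trace] using h.matrix_det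

end Calculus

theorem superdeterminant_ode_general {n : ℕ}
    (Up Um Bp Bm E : ℝ → Matrix (Fin n) (Fin n) ℂ)
    (hUp : ∀ t : ℝ, HasDerivAt Up (-(Bp t + Complex.I • E t) * Up t) t)
    (hUm : ∀ t : ℝ, HasDerivAt Um (-(Bm t + Complex.I • E t) * Um t) t)
    (hinv : ∀ t : ℝ, IsUnit (Um t)) :
    ∀ t : ℝ,
      HasDerivAt (fun s => (Up s).det * ((Um s).det)⁻¹)
        (-((Up t).det * ((Um t).det)⁻¹) * ((Bp t).trace - (Bm t).trace)) t := by
  intro t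
  have hdetUm : (Um t).det ≠ 0 := ((isUnit_iff_isUnit_det _).mp (hinv t)).ne_zero
  have hD := (hUp t).matrix_det_of_eq_mul.fun_div (hUm t).matrix_det_of_eq_mul hdetUm
  simp only [div_eq_mul_inv] at hD
  refine hD.congr_deriv ?_
  simp only [trace_neg, trace_add, trace_smul, smul_eq_mul]
  field_simp
  ring

/-- The super-determinant `D(t) = Det U₊(t) · (Det U₋(t))⁻¹` of solutions of
`U±' = -(B± + iE)U±` satisfies `D' = -D·(Tr B₊ - Tr B₋)`: the dynamical phase
`E` cancels. -/
theorem superdeterminant_ode {n : ℕ}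
    (Up Um Bp Bm E : ℝ → Matrix (Fin n) (Fin n) ℂ)
    (hBp : Continuous Bp) (hBm : Continuous Bm) (hE : Continuous E)
    (hUp : ∀ t : ℝ, HasDerivAt Up (-(Bp t + Complex.I • E t) * Up t) t)
    (hUm : ∀ t : ℝ, HasDerivAt Um (-(Bm t + Complex.I • E t) * Um t) t)
    (hUp0 : Up 0 = 1) (hUm0 : Um 0 = 1)
    (hinv : ∀ t : ℝ, IsUnit (Um t)) :
    ∀ t : ℝ,
      HasDerivAt (fun s => (Up s).det * ((Um s).det)⁻¹)
        (-((Up t).det * ((Um t).det)⁻¹) * ((Bp t).trace - (Bm t).trace)) t :=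
  superdeterminant_ode_general Up Um Bp Bm E hUp hUm hinv
end

section
/- Adiabatic invariance of kernel dimensions (finite-dimensional version): let H(t), t ∈ [0,1], be a continuous family of positive semidefinite Hermitian matrices commuting with a fixed involution τ, such that the rank of H(t) is constant in t and dim ker H(0) ∩ V₊ ≠ dim ker H(0) ∩ V₋, and such that for every t the nonzero eigenvalues of H(t) restricted to V₊ coincide (with multiplicity) with those restricted to V₋. Then dim(ker H(t) ∩ V₊) = dim(ker H(0) ∩ V₊) and dim(ker H(t) ∩ V₋) = dim(ker H(0) ∩ V₋) for all t. -/
/-!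
Write `d₊(t)`, `d₋(t)` for the dimensions of `ker H(t) ∩ V₊` and `ker H(t) ∩ V₋`. As `H(t)`
commutes with the self-adjoint involution `τ`, its kernel splits along `V = V₊ ⊕ V₋`, so
`d₊ + d₋ = dim ker H(t)`, which is constant. As `H(t)` is self-adjoint it is diagonalisable on
each of `V₊`, `V₋`, so `dim V± = ∑_μ dim (E_μ(H(t)) ∩ V±)`; the pairing of the nonzero eigenvalues
cancels all terms with `μ ≠ 0` from the difference, leaving `d₊ - d₋ = dim V₊ - dim V₋`,
which is constant as well.
-/

open Module Module.End

section Field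

variable {K V : Type*} [Field K] [AddCommGroup V] [Module K V]

theorem eq_one_or_eq_neg_one_of_hasEigenvalue_of_involutive {f : End K V}
    (hf : Function.Involutive f) {μ : K} (hμ : f.HasEigenvalue μ) : μ = 1 ∨ μ = -1 := by
  obtain ⟨v, hv⟩ := hμ.exists_hasEigenvector
  have : (μ * μ) • v = (1 : K) • v := by
    rw [one_smul, mul_smul, ← hv.apply_eq_smul, ← map_smul, ← hv.apply_eq_smul, hf v]
  exact mul_self_eq_one_iff.mp (smul_left_injective K hv.2 this)

variable [FiniteDimensional K V]

theorem iSupIndep.finrank_biSup_eq_sum {ι : Type*} [DecidableEq ι] {W : ι → Submodule K V}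
    (h : iSupIndep W) (s : Finset ι) :
    finrank K ↥(⨆ i ∈ s, W i) = ∑ i ∈ s, finrank K ↥(W i) := by
  induction s using Finset.induction_on with
  | empty => simp
  | @insert a s ha ih =>
    have hdisj : Disjoint (W a) (⨆ i ∈ s, W i) :=
      (h a).mono_right <| iSup₂_le fun i hi =>
        le_iSup₂ (f := fun j (_ : j ≠ a) => W j) i (ne_of_mem_of_not_mem hi ha)
    have := Submodule.finrank_sup_add_finrank_inf_eq (W a) (⨆ i ∈ s, W i)
    rw [hdisj.eq_bot, finrank_bot, add_zero] at this
    rw [Finset.iSup_insert, Finset.sum_insert ha, ← ih, this]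

theorem finrank_eq_sum_finrank_inf_eigenspace {f : End K V} {W : Submodule K V}
    (hW : ⨆ μ, W ⊓ eigenspace f μ = W) {s : Finset K} (hs : ∀ μ, f.HasEigenvalue μ → μ ∈ s) :
    finrank K W = ∑ μ ∈ s, finrank K ↥(W ⊓ eigenspace f μ) := by
  classical
  have hindep : iSupIndep fun μ => W ⊓ eigenspace f μ :=
    (eigenspaces_iSupIndep f).mono fun _ => inf_le_right
  have hbiSup : ⨆ μ ∈ s, W ⊓ eigenspace f μ = W := by
    refine le_antisymm (iSup₂_le fun _ _ => inf_le_left) ?_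
    conv_lhs => rw [← hW]
    refine iSup_le fun μ => ?_
    by_cases hμ : μ ∈ s
    · exact le_iSup₂_of_le μ hμ le_rfl
    · have hbot : eigenspace f μ = ⊥ := not_not.mp (mt (hs μ) hμ)
      simp [hbot]
  rw [← hindep.finrank_biSup_eq_sum s, hbiSup]

end Field

section InnerProduct

variable {𝕜 E : Type*} [RCLike 𝕜] [NormedAddCommGroup E] [InnerProductSpace 𝕜 E]
  [FiniteDimensional 𝕜 E] {A B : E →ₗ[𝕜] E}

theorem finrank_ker_inf_eigenspace_one_add_neg_one (hB : B.IsSymmetric)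
    (hBB : Function.Involutive B) (hAB : Commute A B) :
    finrank 𝕜 ↥(LinearMap.ker A ⊓ eigenspace B 1) +
      finrank 𝕜 ↥(LinearMap.ker A ⊓ eigenspace B (-1)) = finrank 𝕜 ↥(LinearMap.ker A) := by
  have hsplit := finrank_eq_sum_finrank_inf_eigenspace (s := {1, -1})
    (hB.iSup_eigenspace_inf_eigenspace_of_commute (α := 0) hAB)
    fun μ hμ => by simpa using eq_one_or_eq_neg_one_of_hasEigenvalue_of_involutive hBB hμ
  rw [Finset.sum_pair (by norm_num), eigenspace_zero] at hsplit
  exact hsplit.symm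

theorem finrank_ker_inf_eigenspace_sub_eq_finrank_eigenspace_sub (hA : A.IsSymmetric)
    (hAB : Commute A B) {a b : 𝕜} (hpair : ∀ μ : 𝕜, μ ≠ 0 →
      finrank 𝕜 ↥(eigenspace A μ ⊓ eigenspace B a) =
        finrank 𝕜 ↥(eigenspace A μ ⊓ eigenspace B b)) :
    (finrank 𝕜 ↥(LinearMap.ker A ⊓ eigenspace B a) : ℤ) -
        finrank 𝕜 ↥(LinearMap.ker A ⊓ eigenspace B b) =
      (finrank 𝕜 ↥(eigenspace B a) : ℤ) - finrank 𝕜 ↥(eigenspace B b) := by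
  classical
  obtain ⟨s, hs0, hs⟩ : ∃ s : Finset 𝕜, 0 ∈ s ∧ ∀ μ, HasEigenvalue A μ → μ ∈ s :=
    ⟨insert 0 (finite_hasEigenvalue A).toFinset, Finset.mem_insert_self _ _,
      fun μ hμ => Finset.mem_insert_of_mem (by simpa using hμ)⟩
  have hsplit (c : 𝕜) : finrank 𝕜 ↥(eigenspace B c) =
      ∑ μ ∈ s, finrank 𝕜 ↥(eigenspace A μ ⊓ eigenspace B c) := by
    rw [finrank_eq_sum_finrank_inf_eigenspace
      (hA.iSup_eigenspace_inf_eigenspace_of_commute hAB.symm) hs]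
    exact Finset.sum_congr rfl fun μ _ => by rw [inf_comm]
  rw [hsplit a, hsplit b, Nat.cast_sum, Nat.cast_sum, ← Finset.sum_sub_distrib,
    Finset.sum_eq_single_of_mem 0 hs0
      fun μ _ hμ => by rw [hpair μ hμ, sub_self], eigenspace_zero]

end InnerProduct

theorem adiabatic_invariance_of_kernel_dims_general
    {V : Type*} [NormedAddCommGroup V] [InnerProductSpace ℂ V]
    [FiniteDimensional ℂ V]
    (τ : V →L[ℂ] V) (H : ℝ → V →L[ℂ] V)
    (hτinv : ∀ v : V, τ (τ v) = v)
    (hτsa : ∀ v w : V, (inner ℂ (τ v) w : ℂ) = inner ℂ v (τ w))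
    (hsa : ∀ t ∈ Set.Icc (0 : ℝ) 1, ∀ v w : V,
      (inner ℂ (H t v) w : ℂ) = inner ℂ v (H t w))
    (hcomm : ∀ t ∈ Set.Icc (0 : ℝ) 1, ∀ v : V, H t (τ v) = τ (H t v))
    (hrank : ∀ t ∈ Set.Icc (0 : ℝ) 1,
      finrank ℂ ↥(LinearMap.ker ((H t : V →ₗ[ℂ] V))) =
        finrank ℂ ↥(LinearMap.ker ((H 0 : V →ₗ[ℂ] V))))
    (hspec : ∀ t ∈ Set.Icc (0 : ℝ) 1, ∀ μ : ℂ, μ ≠ 0 →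
      finrank ℂ ↥(Module.End.eigenspace ((H t : V →ₗ[ℂ] V)) μ ⊓
          Module.End.eigenspace ((τ : V →ₗ[ℂ] V)) 1) =
        finrank ℂ ↥(Module.End.eigenspace ((H t : V →ₗ[ℂ] V)) μ ⊓
          Module.End.eigenspace ((τ : V →ₗ[ℂ] V)) (-1))) :
    ∀ t ∈ Set.Icc (0 : ℝ) 1,
      finrank ℂ ↥(LinearMap.ker ((H t : V →ₗ[ℂ] V)) ⊓
          Module.End.eigenspace ((τ : V →ₗ[ℂ] V)) 1) =
        finrank ℂ ↥(LinearMap.ker ((H 0 : V →ₗ[ℂ] V)) ⊓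
          Module.End.eigenspace ((τ : V →ₗ[ℂ] V)) 1) ∧
      finrank ℂ ↥(LinearMap.ker ((H t : V →ₗ[ℂ] V)) ⊓
          Module.End.eigenspace ((τ : V →ₗ[ℂ] V)) (-1)) =
        finrank ℂ ↥(LinearMap.ker ((H 0 : V →ₗ[ℂ] V)) ⊓
          Module.End.eigenspace ((τ : V →ₗ[ℂ] V)) (-1)) := by
  intro t ht
  have h0 : (0 : ℝ) ∈ Set.Icc (0 : ℝ) 1 := ⟨le_rfl, zero_le_one⟩
  have hH_comm (s : ℝ) (hs : s ∈ Set.Icc (0 : ℝ) 1) : Commute (H s : V →ₗ[ℂ] V) τ :=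
    LinearMap.ext (hcomm s hs)
  have hsum (s : ℝ) (hs : s ∈ Set.Icc (0 : ℝ) 1) :=
    finrank_ker_inf_eigenspace_one_add_neg_one hτsa hτinv (hH_comm s hs)
  have hdiff (s : ℝ) (hs : s ∈ Set.Icc (0 : ℝ) 1) :=
    finrank_ker_inf_eigenspace_sub_eq_finrank_eigenspace_sub (hsa s hs) (hH_comm s hs) (hspec s hs)
  have := hrank t ht
  have := hsum t ht; have := hsum 0 h0
  have := hdiff t ht; have := hdiff 0 h0
  omega

/-- Adiabatic invariance of the kernel dimensions: for a continuous family of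
positive semidefinite Hermitian operators `H(t)` commuting with an involution
`τ`, with constant kernel dimension, supersymmetric pairing of nonzero
eigenvalues, and `dim(ker H(0) ∩ V₊) ≠ dim(ker H(0) ∩ V₋)`, the bosonic and
fermionic kernel dimensions are constant in `t ∈ [0,1]`. -/
theorem adiabatic_invariance_of_kernel_dims
    {V : Type*} [NormedAddCommGroup V] [InnerProductSpace ℂ V]
    [FiniteDimensional ℂ V]
    (τ : V →L[ℂ] V) (H : ℝ → V →L[ℂ] V)
    (hτinv : ∀ v : V, τ (τ v) = v)
    (hτsa : ∀ v w : V, (inner ℂ (τ v) w : ℂ) = inner ℂ v (τ w))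
    (hH : ContinuousOn H (Set.Icc (0 : ℝ) 1))
    (hsa : ∀ t ∈ Set.Icc (0 : ℝ) 1, ∀ v w : V,
      (inner ℂ (H t v) w : ℂ) = inner ℂ v (H t w))
    (hpos : ∀ t ∈ Set.Icc (0 : ℝ) 1, ∀ v : V, 0 ≤ (inner ℂ v (H t v) : ℂ).re)
    (hcomm : ∀ t ∈ Set.Icc (0 : ℝ) 1, ∀ v : V, H t (τ v) = τ (H t v))
    (hrank : ∀ t ∈ Set.Icc (0 : ℝ) 1,
      finrank ℂ ↥(LinearMap.ker ((H t : V →ₗ[ℂ] V))) =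
        finrank ℂ ↥(LinearMap.ker ((H 0 : V →ₗ[ℂ] V))))
    (hspec : ∀ t ∈ Set.Icc (0 : ℝ) 1, ∀ μ : ℂ, μ ≠ 0 →
      finrank ℂ ↥(Module.End.eigenspace ((H t : V →ₗ[ℂ] V)) μ ⊓
          Module.End.eigenspace ((τ : V →ₗ[ℂ] V)) 1) =
        finrank ℂ ↥(Module.End.eigenspace ((H t : V →ₗ[ℂ] V)) μ ⊓
          Module.End.eigenspace ((τ : V →ₗ[ℂ] V)) (-1)))
    (hne : finrank ℂ ↥(LinearMap.ker ((H 0 : V →ₗ[ℂ] V)) ⊓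
          Module.End.eigenspace ((τ : V →ₗ[ℂ] V)) 1) ≠
        finrank ℂ ↥(LinearMap.ker ((H 0 : V →ₗ[ℂ] V)) ⊓
          Module.End.eigenspace ((τ : V →ₗ[ℂ] V)) (-1))) :
    ∀ t ∈ Set.Icc (0 : ℝ) 1,
      finrank ℂ ↥(LinearMap.ker ((H t : V →ₗ[ℂ] V)) ⊓
          Module.End.eigenspace ((τ : V →ₗ[ℂ] V)) 1) =
        finrank ℂ ↥(LinearMap.ker ((H 0 : V →ₗ[ℂ] V)) ⊓
          Module.End.eigenspace ((τ : V →ₗ[ℂ] V)) 1) ∧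
      finrank ℂ ↥(LinearMap.ker ((H t : V →ₗ[ℂ] V)) ⊓
          Module.End.eigenspace ((τ : V →ₗ[ℂ] V)) (-1)) =
        finrank ℂ ↥(LinearMap.ker ((H 0 : V →ₗ[ℂ] V)) ⊓
          Module.End.eigenspace ((τ : V →ₗ[ℂ] V)) (-1)) :=
  adiabatic_invariance_of_kernel_dims_general τ H hτinv hτsa hsa hcomm hrank hspec
end
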